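/- arXiv:1811.03445 — 4 statements merged into one kernel-verified Lean document; each statement's English description precedes it below -/
import Mathlib

section
/- Let $(f_i)_{i\ge 0}$ be nonnegative reals with $f_0>0$, $\sum_i f_i = 1$, and $\gamma_1 := \sum_{i\ge1} i f_i < 1$. Let $(Q_n)$ satisfy $Q_n = \sum_{i=0}^n Q_{n-i+1} f_i$, $Q_0 \ne 0$. Then $\lim_{n\to\infty} Q_n = Q_0/(1-\gamma_1)$. -/
/-!
With the tails `rₙ = ∑_{i > n} fᵢ`, summation by parts gives `∑ rₙ = γ₁`, and summing the
recurrence turns it into the renewal equation `f₀ Qₙ = Q₀ (1 - rₙ) + ∑_{j<n} r_{j+1} Q_{n-1-j}`,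
whose kernel `r_{j+1} / f₀` has total mass `κ = (γ₁ - r₀) / f₀ < 1` (as `f₀ + r₀ = 1`).
A defective renewal equation `xₙ = aₙ + ∑_{j<n} gⱼ x_{n-1-j}` with `aₙ → α` has `xₙ → α / (1 - κ)`:
the error is bounded, and once it is eventually at most `c`, splitting the convolution into recent
and old terms shows it is eventually at most `κ c + ε`. Finally `α / (1 - κ) = Q₀ / (1 - γ₁)`.
-/

open Filter Finset Topology

noncomputable def tailSum (f : ℕ → ℝ) (n : ℕ) : ℝ := ∑' i, f (i + (n + 1))

section TailSum

variable {f : ℕ → ℝ}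

theorem Summable.of_nat_mul (hmean : Summable fun i : ℕ => (i : ℝ) * f i) (hf : ∀ i, 0 ≤ f i) :
    Summable f :=
  (summable_nat_add_iff 1).1 <| (hmean.comp_injective (add_left_injective 1)).of_nonneg_of_le
    (fun _ => hf _) fun i => le_mul_of_one_le_left (hf _) (by simp)

theorem tailSum_nonneg (hf : ∀ i, 0 ≤ f i) (n : ℕ) : 0 ≤ tailSum f n :=
  tsum_nonneg fun _ => hf _

theorem sum_range_add_tailSum (hf : Summable f) (n : ℕ) :
    ∑ i ∈ range (n + 1), f i + tailSum f n = ∑' i, f i :=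
  hf.sum_add_tsum_nat_add (n + 1)

theorem tailSum_eq_add_tailSum_succ (hf : Summable f) (n : ℕ) :
    tailSum f n = f (n + 1) + tailSum f (n + 1) := by
  have h := sum_range_add_tailSum hf (n + 1)
  rw [sum_range_succ, ← sum_range_add_tailSum hf n] at h
  linarith

theorem sum_range_tailSum (hf : Summable f) (N : ℕ) :
    ∑ n ∈ range N, tailSum f n = ∑ m ∈ range (N + 1), (m : ℝ) * f m + N * tailSum f N := by
  induction N with
  | zero => simp
  | succ N ih =>
    rw [sum_range_succ, ih, sum_range_succ _ (N + 1), tailSum_eq_add_tailSum_succ hf N]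
    push_cast
    ring

theorem tendsto_mul_tailSum (hf : ∀ i, 0 ≤ f i) (hmean : Summable fun i : ℕ => (i : ℝ) * f i) :
    Tendsto (fun N : ℕ => N * tailSum f N) atTop (𝓝 0) := by
  have hmean_tail : Tendsto (fun N : ℕ => ∑' i, ((i + (N + 1) : ℕ) : ℝ) * f (i + (N + 1)))
      atTop (𝓝 0) :=
    (tendsto_sum_nat_add fun i : ℕ => (i : ℝ) * f i).comp (tendsto_add_atTop_nat 1)
  refine squeeze_zero (fun N => mul_nonneg N.cast_nonneg (tailSum_nonneg hf N)) (fun N => ?_)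
    hmean_tail
  rw [tailSum, ← tsum_mul_left]
  refine Summable.tsum_le_tsum (fun i => ?_)
    ((summable_nat_add_iff _).2 (hmean.of_nat_mul hf) |>.mul_left _)
    ((summable_nat_add_iff (f := fun i : ℕ => (i : ℝ) * f i) _).2 hmean)
  gcongr
  · exact hf _
  · linarith [i.cast_nonneg (α := ℝ)]

theorem hasSum_tailSum (hf : ∀ i, 0 ≤ f i) (hmean : Summable fun i : ℕ => (i : ℝ) * f i) :
    HasSum (tailSum f) (∑' i : ℕ, (i : ℝ) * f i) := by
  refine (hasSum_iff_tendsto_nat_of_nonneg (tailSum_nonneg hf) _).2 ?_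
  simp_rw [sum_range_tailSum (hmean.of_nat_mul hf)]
  simpa using (hmean.hasSum.tendsto_sum_nat.comp (tendsto_add_atTop_nat 1)).add
    (tendsto_mul_tailSum hf hmean)

end TailSum

theorem renewal_eq_of_rec {f r Q : ℕ → ℝ} (hr0 : f 0 + r 0 = 1)
    (hr : ∀ n, r n = f (n + 1) + r (n + 1))
    (hrec : ∀ n, Q n = ∑ i ∈ range (n + 1), Q (n - i + 1) * f i) (n : ℕ) :
    f 0 * Q n = Q 0 * (1 - r n) + ∑ j ∈ range n, r (j + 1) * Q (n - 1 - j) := by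
  induction n with
  | zero => simp only [range_zero, sum_empty]; linear_combination Q 0 * hr0
  | succ n ih =>
    have hQ : Q n = f 0 * Q (n + 1) + ∑ j ∈ range n, f (j + 1) * Q (n - j) := by
      rw [hrec n, sum_range_succ', add_comm, Nat.sub_zero, mul_comm]
      congr 1
      refine sum_congr rfl fun j hj => ?_
      rw [mul_comm, show n - (j + 1) + 1 = n - j by grind]
    have hconv : ∑ j ∈ range (n + 1), r (j + 1) * Q (n + 1 - 1 - j)
        = r 0 * Q n + ∑ j ∈ range n, r (j + 1) * Q (n - 1 - j)
          - (∑ j ∈ range n, f (j + 1) * Q (n - j) + f (n + 1) * Q 0) := by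
      have hstep : ∀ j ∈ range (n + 1), r (j + 1) * Q (n + 1 - 1 - j)
          = r j * Q (n - j) - f (j + 1) * Q (n - j) := fun j _ => by
        rw [hr j, Nat.add_sub_cancel]; ring
      rw [sum_congr rfl hstep, sum_sub_distrib, sum_range_succ', sum_range_succ _ n]
      simp only [Nat.sub_self, Nat.sub_zero, Nat.sub_sub, Nat.add_comm _ 1]
      ring
    rw [hconv]
    linear_combination ih - hQ - Q n * hr0 - Q 0 * hr n

section Renewal

variable {g u b : ℕ → ℝ} {κ : ℝ}

theorem le_div_of_renewal_le (hg : ∀ j, 0 ≤ g j) (hgκ : HasSum g κ) (hκ : κ < 1) {B : ℝ}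
    (hB : 0 ≤ B) (hu : ∀ n, u n ≤ B + ∑ j ∈ range n, g j * u (n - 1 - j)) (n : ℕ) :
    u n ≤ B / (1 - κ) := by
  induction n using Nat.strong_induction_on with
  | _ n ih =>
    have hconv : ∑ j ∈ range n, g j * u (n - 1 - j) ≤ κ * (B / (1 - κ)) :=
      calc ∑ j ∈ range n, g j * u (n - 1 - j)
          ≤ ∑ j ∈ range n, g j * (B / (1 - κ)) :=
            sum_le_sum fun j hj => mul_le_mul_of_nonneg_left (ih _ (by grind)) (hg j)
        _ = (∑ j ∈ range n, g j) * (B / (1 - κ)) := (sum_mul ..).symm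
        _ ≤ κ * (B / (1 - κ)) :=
            mul_le_mul_of_nonneg_right (sum_le_hasSum _ (fun j _ => hg j) hgκ)
              (div_nonneg hB (by linarith))
    have hfix : B + κ * (B / (1 - κ)) = B / (1 - κ) := by
      field_simp [(by linarith : (1 - κ) ≠ 0)]; ring
    linarith [hu n]

theorem eventually_le_of_renewal_le (hg : ∀ j, 0 ≤ g j) (hgκ : HasSum g κ)
    (hu0 : ∀ n, 0 ≤ u n) {M : ℝ} (hM : ∀ n, u n ≤ M) (hb : Tendsto b atTop (𝓝 0))
    (hu : ∀ n, u n ≤ b n + ∑ j ∈ range n, g j * u (n - 1 - j)) {c : ℝ} (hc : 0 ≤ c)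
    (hev : ∀ᶠ n in atTop, u n ≤ c) {ε : ℝ} (hε : 0 < ε) :
    ∀ᶠ n in atTop, u n ≤ κ * c + ε := by
  obtain ⟨N, hN⟩ := eventually_atTop.1 hev
  have hsmall : Tendsto (fun n => b n + M * ∑' i, g (i + (n - N))) atTop (𝓝 0) := by
    simpa using hb.add (((tendsto_sum_nat_add g).comp (tendsto_sub_atTop_nat N)).const_mul M)
  filter_upwards [hsmall.eventually_le_const hε, eventually_ge_atTop N] with n hn hNn
  obtain ⟨m, rfl⟩ := Nat.exists_eq_add_of_le hNn
  have hM0 : 0 ≤ M := (hu0 0).trans (hM 0)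
  have hrecent : ∑ j ∈ range m, g j * u (N + m - 1 - j) ≤ κ * c :=
    calc ∑ j ∈ range m, g j * u (N + m - 1 - j)
        ≤ ∑ j ∈ range m, g j * c :=
          sum_le_sum fun j hj => mul_le_mul_of_nonneg_left (hN _ (by grind)) (hg j)
      _ = (∑ j ∈ range m, g j) * c := (sum_mul ..).symm
      _ ≤ κ * c := mul_le_mul_of_nonneg_right (sum_le_hasSum _ (fun j _ => hg j) hgκ) hc
  have hold : ∑ j ∈ range N, g (m + j) * u (N + m - 1 - (m + j)) ≤ M * ∑' i, g (i + m) :=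
    calc ∑ j ∈ range N, g (m + j) * u (N + m - 1 - (m + j))
        ≤ ∑ j ∈ range N, g (j + m) * M :=
          sum_le_sum fun j _ => by rw [add_comm m j]; exact mul_le_mul_of_nonneg_left (hM _) (hg _)
      _ = M * ∑ j ∈ range N, g (j + m) := by
          rw [mul_sum]; exact sum_congr rfl fun _ _ => mul_comm _ _
      _ ≤ M * ∑' i, g (i + m) :=
          mul_le_mul_of_nonneg_left (Summable.sum_le_tsum _ (fun j _ => hg _)
            ((summable_nat_add_iff m).2 hgκ.summable)) hM0
  have hsplit := sum_range_add (fun j => g j * u (N + m - 1 - j)) m N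
  rw [add_comm m N] at hsplit
  simp only [Nat.add_sub_cancel_left] at hn
  linarith [hu (N + m)]

theorem tendsto_zero_of_renewal_le (hg : ∀ j, 0 ≤ g j) (hgκ : HasSum g κ) (hκ : κ < 1)
    (hu0 : ∀ n, 0 ≤ u n) (hb : Tendsto b atTop (𝓝 0))
    (hu : ∀ n, u n ≤ b n + ∑ j ∈ range n, g j * u (n - 1 - j)) :
    Tendsto u atTop (𝓝 0) := by
  have hκ0 : 0 ≤ κ := hgκ.nonneg hg
  obtain ⟨B, hB⟩ := hb.bddAbove_range
  set M := max B 0 / (1 - κ)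
  have hM : ∀ n, u n ≤ M := le_div_of_renewal_le hg hgκ hκ (le_max_right B 0) fun n =>
    (hu n).trans (by gcongr; exact (hB ⟨n, rfl⟩).trans (le_max_left B 0))
  have hiter : ∀ ε > 0, ∀ k : ℕ, ∀ᶠ n in atTop, u n ≤ ε + κ ^ k * M := by
    intro ε hε k
    induction k with
    | zero => exact Eventually.of_forall fun n => by linarith [hM n]
    | succ k ih =>
      have hc : 0 ≤ ε + κ ^ k * M := by
        have := (hu0 0).trans (hM 0)
        positivity
      filter_upwards [eventually_le_of_renewal_le hg hgκ hu0 hM hb hu hc ih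
        (mul_pos (sub_pos.2 hκ) hε)] with n hn
      linarith [show κ * (ε + κ ^ k * M) + (1 - κ) * ε = ε + κ ^ (k + 1) * M by ring]
  refine tendsto_order.2 ⟨fun a ha => Eventually.of_forall fun n => ha.trans_le (hu0 n),
    fun a ha => ?_⟩
  have hpow : Tendsto (fun k => κ ^ k * M) atTop (𝓝 0) := by
    simpa using (tendsto_pow_atTop_nhds_zero_of_lt_one hκ0 hκ).mul_const M
  obtain ⟨k, hk⟩ := (hpow.eventually_lt_const (half_pos ha)).exists
  filter_upwards [hiter (a / 2) (half_pos ha) k] with n hn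
  linarith

theorem tendsto_of_renewal_eq {x a : ℕ → ℝ} {α : ℝ} (hg : ∀ j, 0 ≤ g j) (hgκ : HasSum g κ)
    (hκ : κ < 1) (ha : Tendsto a atTop (𝓝 α))
    (hx : ∀ n, x n = a n + ∑ j ∈ range n, g j * x (n - 1 - j)) :
    Tendsto x atTop (𝓝 (α / (1 - κ))) := by
  set L := α / (1 - κ)
  have hL : α = L * (1 - κ) := (div_mul_cancel₀ α (by linarith : (1 - κ) ≠ 0)).symm
  have herr : ∀ n, x n - L = (a n - α) - L * ∑' i, g (i + n)
      + ∑ j ∈ range n, g j * (x (n - 1 - j) - L) := fun n => by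
    have hsplit := hgκ.summable.sum_add_tsum_nat_add n
    rw [hgκ.tsum_eq] at hsplit
    simp only [mul_sub, sum_sub_distrib, ← sum_mul]
    linear_combination hx n + hL + L * hsplit
  have hb : Tendsto (fun n => |a n - α| + |L| * ∑' i, g (i + n)) atTop (𝓝 0) := by
    simpa using ((ha.sub_const α).abs).add ((tendsto_sum_nat_add g).const_mul |L|)
  refine tendsto_iff_norm_sub_tendsto_zero.2 <| tendsto_zero_of_renewal_le hg hgκ hκ
    (fun n => norm_nonneg _) hb fun n => ?_
  have hT : 0 ≤ ∑' i, g (i + n) := tsum_nonneg fun i => hg _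
  simp only [Real.norm_eq_abs]
  rw [herr n]
  calc _ ≤ |a n - α| + |L * ∑' i, g (i + n)| + |∑ j ∈ range n, g j * (x (n - 1 - j) - L)| :=
        (abs_add_le _ _).trans (add_le_add_left (abs_sub _ _) _)
    _ ≤ _ := by
      rw [abs_mul, abs_of_nonneg hT]
      gcongr
      refine (abs_sum_le_sum_abs _ _).trans_eq (sum_congr rfl fun j _ => ?_)
      rw [abs_mul, abs_of_nonneg (hg j)]

end Renewal

theorem stmt_1_general (f Q : ℕ → ℝ)
    (hf_nonneg : ∀ i, 0 ≤ f i)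
    (hf_sum : ∑' i, f i = 1)
    (hmean_summable : Summable (fun i : ℕ => (i : ℝ) * f i))
    (hmean : ∑' (i : ℕ), (i : ℝ) * f i < 1)
    (hrec : ∀ n, Q n = ∑ i ∈ Finset.range (n + 1), Q (n - i + 1) * f i) :
    Tendsto Q atTop (nhds (Q 0 / (1 - ∑' (i : ℕ), (i : ℝ) * f i))) := by
  set γ := ∑' (i : ℕ), (i : ℝ) * f i
  set r := tailSum f
  have hf : Summable f := hmean_summable.of_nat_mul hf_nonneg
  have hr : HasSum r γ := hasSum_tailSum hf_nonneg hmean_summable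
  have hr0 : f 0 + r 0 = 1 := by simpa [hf_sum] using sum_range_add_tailSum hf 0
  have hf0 : 0 < f 0 := by linarith [le_hasSum hr 0 fun j _ => tailSum_nonneg hf_nonneg j]
  have hg : HasSum (fun j => r (j + 1) / f 0) ((γ - r 0) / f 0) := by
    simpa using ((hasSum_nat_add_iff' 1).2 hr).div_const (f 0)
  have ha : Tendsto (fun n => Q 0 * (1 - r n) / f 0) atTop (𝓝 (Q 0 / f 0)) := by
    simpa using ((hr.summable.tendsto_atTop_zero.const_sub 1).const_mul (Q 0)).div_const (f 0)
  have hQ (n : ℕ) :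
      Q n = Q 0 * (1 - r n) / f 0 + ∑ j ∈ range n, r (j + 1) / f 0 * Q (n - 1 - j) := by
    simp only [div_mul_eq_mul_div, ← sum_div, ← add_div]
    rw [eq_div_iff hf0.ne', ← renewal_eq_of_rec hr0 (tailSum_eq_add_tailSum_succ hf) hrec n]
    ring
  have hlim := tendsto_of_renewal_eq (fun j => div_nonneg (tailSum_nonneg hf_nonneg _) hf0.le) hg
    (by rw [div_lt_one hf0]; linarith) ha hQ
  convert hlim using 2
  field_simp
  congr 1
  linarith

theorem stmt_1 (f Q : ℕ → ℝ)
    (hf_nonneg : ∀ i, 0 ≤ f i) (hf0 : 0 < f 0)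
    (hf_summable : Summable f) (hf_sum : ∑' i, f i = 1)
    (hmean_summable : Summable (fun i : ℕ => (i : ℝ) * f i))
    (hmean : ∑' (i : ℕ), (i : ℝ) * f i < 1)
    (hQ0 : Q 0 ≠ 0)
    (hrec : ∀ n, Q n = ∑ i ∈ Finset.range (n + 1), Q (n - i + 1) * f i) :
    Tendsto Q atTop (nhds (Q 0 / (1 - ∑' (i : ℕ), (i : ℝ) * f i))) :=
  stmt_1_general f Q hf_nonneg hf_sum hmean_summable hmean hrec
end

section
/- Let $a_0 \le a_1 \le \dots \le a_L$ be real numbers and define $f_L(z) = \left(\sum_{i=0}^L a_i z^i\right) / \left(\sum_{i=0}^L z^i\right)$ for $z \in (0,1)$. Then $f_L$ is nondecreasing on $(0,1)$; moreover, if the $a_i$ are not all equal, $f_L$ is strictly increasing on $(0,1)$. -/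
/-!
Cross-multiplying, `f_L(w) - f_L(z)` has the sign of
`(∑ aᵢ wⁱ)(∑ zʲ) - (∑ aᵢ zⁱ)(∑ wʲ) = ½ ∑ᵢ ∑ⱼ (aᵢ - aⱼ)(wⁱ zʲ - zⁱ wʲ)`.
For `z ≤ w` both factors of each summand have the sign of `i - j`, so every summand is
nonnegative, and a pair with `aᵢ ≠ aⱼ` gives a positive one when `z < w`.
-/

open Finset

section WeightedAverage

variable {ι R : Type*} (s : Finset ι)

theorem two_mul_sum_mul_sum_sub_sum_mul_sum [CommRing R] (a p q : ι → R) :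
    2 * ((∑ i ∈ s, a i * q i) * ∑ j ∈ s, p j - (∑ i ∈ s, a i * p i) * ∑ j ∈ s, q j)
      = ∑ i ∈ s, ∑ j ∈ s, (a i - a j) * (q i * p j - p i * q j) := by
  have hrows : ∑ i ∈ s, ∑ j ∈ s, a i * (q i * p j - p i * q j)
      = (∑ i ∈ s, a i * q i) * ∑ j ∈ s, p j - (∑ i ∈ s, a i * p i) * ∑ j ∈ s, q j := by
    simp only [mul_sub, sum_sub_distrib, sum_mul_sum, mul_assoc]
  have hcols : ∑ i ∈ s, ∑ j ∈ s, a j * (q i * p j - p i * q j)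
      = -∑ i ∈ s, ∑ j ∈ s, a i * (q i * p j - p i * q j) := by
    rw [sum_comm]
    simp only [← sum_neg_distrib]
    exact sum_congr rfl fun i _ => sum_congr rfl fun j _ => by ring
  simp only [sub_mul, sum_sub_distrib, hcols, hrows]
  ring

variable {s} {a p q : ι → ℝ}

theorem sum_mul_div_sum_le_sum_mul_div_sum (hp : 0 < ∑ i ∈ s, p i) (hq : 0 < ∑ i ∈ s, q i)
    (h : ∀ i ∈ s, ∀ j ∈ s, 0 ≤ (a i - a j) * (q i * p j - p i * q j)) :
    (∑ i ∈ s, a i * p i) / ∑ i ∈ s, p i ≤ (∑ i ∈ s, a i * q i) / ∑ i ∈ s, q i := by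
  rw [div_le_div_iff₀ hp hq]
  have := two_mul_sum_mul_sum_sub_sum_mul_sum s a p q
  linarith [sum_nonneg fun i hi => sum_nonneg fun j hj => h i hi j hj]

theorem sum_mul_div_sum_lt_sum_mul_div_sum (hp : 0 < ∑ i ∈ s, p i) (hq : 0 < ∑ i ∈ s, q i)
    (h : ∀ i ∈ s, ∀ j ∈ s, 0 ≤ (a i - a j) * (q i * p j - p i * q j))
    (hpos : ∃ i ∈ s, ∃ j ∈ s, 0 < (a i - a j) * (q i * p j - p i * q j)) :
    (∑ i ∈ s, a i * p i) / ∑ i ∈ s, p i < (∑ i ∈ s, a i * q i) / ∑ i ∈ s, q i := by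
  rw [div_lt_div_iff₀ hp hq]
  obtain ⟨i, hi, j, hj, hij⟩ := hpos
  have hrow : 0 < ∑ j ∈ s, (a i - a j) * (q i * p j - p i * q j) :=
    sum_pos' (fun j hj => h i hi j hj) ⟨j, hj, hij⟩
  have := two_mul_sum_mul_sum_sub_sum_mul_sum s a p q
  linarith [sum_pos' (fun i hi => sum_nonneg fun j hj => h i hi j hj) ⟨i, hi, hrow⟩]

end WeightedAverage

section Powers

variable {z w : ℝ} {i j : ℕ}

theorem pow_mul_pow_le_pow_mul_pow (hz : 0 ≤ z) (hzw : z ≤ w) (hji : j ≤ i) :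
    z ^ i * w ^ j ≤ w ^ i * z ^ j := by
  obtain ⟨k, rfl⟩ := Nat.exists_eq_add_of_le hji
  calc z ^ (j + k) * w ^ j = z ^ k * (z * w) ^ j := by ring
    _ ≤ w ^ k * (z * w) ^ j := by gcongr; exact pow_nonneg (mul_nonneg hz (hz.trans hzw)) j
    _ = w ^ (j + k) * z ^ j := by ring

theorem pow_mul_pow_lt_pow_mul_pow (hz : 0 < z) (hzw : z < w) (hji : j < i) :
    z ^ i * w ^ j < w ^ i * z ^ j := by
  obtain ⟨k, rfl⟩ := Nat.exists_eq_add_of_lt hji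
  have hw : 0 < w := hz.trans hzw
  calc z ^ (j + k + 1) * w ^ j = z ^ (k + 1) * (z * w) ^ j := by ring
    _ < w ^ (k + 1) * (z * w) ^ j := by gcongr
    _ = w ^ (j + k + 1) * z ^ j := by ring

end Powers

section MonotoneCoefficients

variable {L : ℕ} {a : ℕ → ℝ} {z w : ℝ} {i j : ℕ}

theorem sub_mul_pow_cross_nonneg (hmono : ∀ i j, i ≤ j → j ≤ L → a i ≤ a j)
    (hz : 0 ≤ z) (hzw : z ≤ w) (hi : i ≤ L) (hj : j ≤ L) :
    0 ≤ (a i - a j) * (w ^ i * z ^ j - z ^ i * w ^ j) := by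
  rcases le_total j i with hji | hij
  · exact mul_nonneg (sub_nonneg.2 (hmono j i hji hi))
      (sub_nonneg.2 (pow_mul_pow_le_pow_mul_pow hz hzw hji))
  · refine mul_nonneg_of_nonpos_of_nonpos (sub_nonpos.2 (hmono i j hij hj)) ?_
    linarith [pow_mul_pow_le_pow_mul_pow hz hzw hij]

theorem sub_mul_pow_cross_pos (hmono : ∀ i j, i ≤ j → j ≤ L → a i ≤ a j)
    (hz : 0 < z) (hzw : z < w) (hi : i ≤ L) (hj : j ≤ L) (hne : a i ≠ a j) :
    0 < (a i - a j) * (w ^ i * z ^ j - z ^ i * w ^ j) := by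
  rcases hne.lt_or_gt with hlt | hgt
  · have hij : i < j := lt_of_not_ge fun hji => (hmono j i hji hi).not_gt hlt
    refine mul_pos_of_neg_of_neg (sub_neg.2 hlt) ?_
    linarith [pow_mul_pow_lt_pow_mul_pow hz hzw hij]
  · have hji : j < i := lt_of_not_ge fun hij => (hmono i j hij hj).not_gt hgt
    exact mul_pos (sub_pos.2 hgt) (sub_pos.2 (pow_mul_pow_lt_pow_mul_pow hz hzw hji))

end MonotoneCoefficients

theorem stmt_5 (L : ℕ) (a : ℕ → ℝ)
    (hmono : ∀ i j, i ≤ j → j ≤ L → a i ≤ a j) :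
    (∀ z w : ℝ, 0 < z → z < 1 → 0 < w → w < 1 → z ≤ w →
      (∑ i ∈ Finset.range (L + 1), a i * z ^ i) / (∑ i ∈ Finset.range (L + 1), z ^ i)
        ≤ (∑ i ∈ Finset.range (L + 1), a i * w ^ i) / (∑ i ∈ Finset.range (L + 1), w ^ i)) ∧
    ((∃ i j, i ≤ L ∧ j ≤ L ∧ a i ≠ a j) →
      ∀ z w : ℝ, 0 < z → z < 1 → 0 < w → w < 1 → z < w →
      (∑ i ∈ Finset.range (L + 1), a i * z ^ i) / (∑ i ∈ Finset.range (L + 1), z ^ i)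
        < (∑ i ∈ Finset.range (L + 1), a i * w ^ i) / (∑ i ∈ Finset.range (L + 1), w ^ i)) := by
  have hden : ∀ z : ℝ, 0 < z → 0 < ∑ i ∈ range (L + 1), z ^ i := fun z hz =>
    sum_pos (fun i _ => pow_pos hz i) nonempty_range_add_one
  have hle : ∀ {i}, i ∈ range (L + 1) → i ≤ L := fun hi => Nat.lt_succ_iff.1 (mem_range.1 hi)
  constructor
  · intro z w hz _ hw _ hzw
    exact sum_mul_div_sum_le_sum_mul_div_sum (hden z hz) (hden w hw) fun i hi j hj =>
      sub_mul_pow_cross_nonneg hmono hz.le hzw (hle hi) (hle hj)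
  · rintro ⟨i, j, hi, hj, hne⟩ z w hz _ hw _ hzw
    refine sum_mul_div_sum_lt_sum_mul_div_sum (hden z hz) (hden w hw)
      (fun i hi j hj => sub_mul_pow_cross_nonneg hmono hz.le hzw.le (hle hi) (hle hj))
      ⟨i, mem_range.2 (Nat.lt_succ_of_le hi), j, mem_range.2 (Nat.lt_succ_of_le hj), ?_⟩
    exact sub_mul_pow_cross_pos hmono hz hzw hi hj hne
end

section
/- Let $j_1, j_2 > 0$, $0 < \rho_2 < 1$, and $\alpha > 0$. Define $J^*(C) = C\left[ j_1 \frac{1}{e^{\alpha C} - 1} + j_2 \frac{\rho_2}{1-\rho_2}\cdot\frac{e^{\alpha C}}{e^{\alpha C}-1} \right]$ for $C \ne 0$, extended continuously at $C = 0$. Then $J^*$ is strictly convex on $\mathbb{R}$. -/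
/-!
Put `h t = t / (exp t - 1)`, `h 0 = 1`. With `b = j₂ ρ₂ / (1 - ρ₂)` one has
`J C = b C + (j₁ + b) / α * h (α C)`, so it suffices that `h` is strictly convex. For `t > 0`,
`h'' t = exp t * (t (exp t + 1) - 2 (exp t - 1)) / (exp t - 1) ^ 3 > 0`, the numerator being positive
because `tanh (t / 2) < t / 2`; the identity `h (-t) = h t + t` carries this over to `t < 0`. The two
halves glue because `h` lies strictly above its tangent line `1 - t / 2` at `0`, which is the same
inequality `tanh (t / 2) < t / 2` once more.
-/

open Real Set Filter Topology

theorem StrictConvexOn.comp_linearMap {𝕜 E F β : Type*} [Semiring 𝕜] [PartialOrder 𝕜]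
    [AddCommMonoid E] [AddCommMonoid F] [Module 𝕜 E] [Module 𝕜 F]
    [AddCommMonoid β] [PartialOrder β] [SMul 𝕜 β] {f : F → β} {s : Set F}
    (hf : StrictConvexOn 𝕜 s f) {g : E →ₗ[𝕜] F} (hg : Function.Injective g) :
    StrictConvexOn 𝕜 (g ⁻¹' s) (f ∘ g) :=
  ⟨hf.1.linear_preimage g, fun x hx y hy hxy a b ha hb hab => by
    simpa only [Function.comp, g.map_add, g.map_smul] using hf.2 hx hy (hg.ne hxy) ha hb hab⟩

theorem StrictConvexOn.const_mul {E : Type*} [AddCommMonoid E] [Module ℝ E] {s : Set E}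
    {f : E → ℝ} {c : ℝ} (hf : StrictConvexOn ℝ s f) (hc : 0 < c) :
    StrictConvexOn ℝ s fun x => c * f x :=
  ⟨hf.1, fun x hx y hy hxy a b ha hb hab => by
    have := mul_lt_mul_of_pos_left (hf.2 hx hy hxy ha hb hab) hc
    simp only [smul_eq_mul] at this ⊢
    linarith⟩

section LinearOrderedField

variable {𝕜 : Type*} [Field 𝕜] [LinearOrder 𝕜] [IsStrictOrderedRing 𝕜]

theorem div_lt_add_div_add {a b c d : 𝕜} (hb : 0 < b) (hd : 0 < d) (h : a / b < c / d) :
    a / b < (a + c) / (b + d) := by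
  rw [div_lt_div_iff₀ hb hd] at h
  rw [div_lt_div_iff₀ hb (add_pos hb hd)]
  linarith

theorem add_div_add_lt_div {a b c d : 𝕜} (hb : 0 < b) (hd : 0 < d) (h : a / b < c / d) :
    (a + c) / (b + d) < c / d := by
  rw [div_lt_div_iff₀ hb hd] at h
  rw [div_lt_div_iff₀ (add_pos hb hd) hd]
  linarith

theorem StrictConvexOn.of_Iic_of_Ici {f : 𝕜 → 𝕜} {a m : 𝕜}
    (hl : StrictConvexOn 𝕜 (Iic a) f) (hr : StrictConvexOn 𝕜 (Ici a) f)
    (hm : ∀ x ≠ a, f a + m * (x - a) < f x) : StrictConvexOn 𝕜 univ f := by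
  have slope_left : ∀ x < a, (f a - f x) / (a - x) < m := fun x hx => by
    rw [div_lt_iff₀ (sub_pos.2 hx)]; linarith [hm x hx.ne]
  have slope_right : ∀ z > a, m < (f z - f a) / (z - a) := fun z hz => by
    rw [lt_div_iff₀ (sub_pos.2 hz)]; linarith [hm z hz.ne']
  refine strictConvexOn_of_slope_strict_mono_adjacent convex_univ fun {x y z} _ _ hxy hyz => ?_
  rcases le_or_gt z a with hza | haz
  · exact hl.slope_strict_mono_adjacent ((hxy.trans hyz).le.trans hza) hza hxy hyz
  rcases le_or_gt a x with hax | hxa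
  · exact hr.slope_strict_mono_adjacent hax (hax.trans (hxy.trans hyz).le) hxy hyz
  rcases lt_trichotomy y a with hya | rfl | hay
  · have hyaz := (slope_left y hya).trans (slope_right z haz)
    calc (f y - f x) / (y - x) < (f a - f y) / (a - y) :=
          hl.slope_strict_mono_adjacent hxa.le self_mem_Iic hxy hya
      _ < (f a - f y + (f z - f a)) / (a - y + (z - a)) :=
          div_lt_add_div_add (sub_pos.2 hya) (sub_pos.2 haz) hyaz
      _ = (f z - f y) / (z - y) := by ring_nf
  · exact (slope_left x hxa).trans (slope_right z haz)
  · have hxay := (slope_left x hxa).trans (slope_right y hay)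
    calc (f y - f x) / (y - x) = (f a - f x + (f y - f a)) / (a - x + (y - a)) := by ring_nf
      _ < (f y - f a) / (y - a) :=
          add_div_add_lt_div (sub_pos.2 hxa) (sub_pos.2 hay) hxay
      _ < (f z - f y) / (z - y) :=
          hr.slope_strict_mono_adjacent self_mem_Ici (hay.trans hyz).le hay hyz

end LinearOrderedField

namespace Real

theorem exp_sub_one_ne_zero {t : ℝ} (ht : t ≠ 0) : exp t - 1 ≠ 0 := by
  rwa [sub_ne_zero, Ne, exp_eq_one_iff]

theorem one_sub_mul_exp_lt_one {t : ℝ} (ht : t ≠ 0) : (1 - t) * exp t < 1 := by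
  have h := mul_lt_mul_of_pos_right (add_one_lt_exp (neg_ne_zero.2 ht)) (exp_pos t)
  rwa [exp_neg, inv_mul_cancel₀ (exp_ne_zero t), neg_add_eq_sub] at h

theorem two_mul_exp_sub_one_lt {t : ℝ} (ht : 0 < t) : 2 * (exp t - 1) < t * (exp t + 1) := by
  let F : ℝ → ℝ := fun s => s * (exp s + 1) - 2 * (exp s - 1)
  have hF : ∀ s, HasDerivAt F (1 - (1 - s) * exp s) s := fun s =>
    (((hasDerivAt_id' s).mul ((hasDerivAt_exp s).add_const 1)).sub
      (((hasDerivAt_exp s).sub_const 1).const_mul 2)).congr_deriv (by ring)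
  have hmono : StrictMonoOn F (Ici 0) := by
    refine strictMonoOn_of_deriv_pos (convex_Ici 0) (by fun_prop) fun s hs => ?_
    rw [interior_Ici] at hs
    rw [(hF s).deriv, sub_pos]
    exact one_sub_mul_exp_lt_one (ne_of_gt hs)
  have := hmono self_mem_Ici ht.le ht
  simp only [F, zero_mul, exp_zero, sub_self, mul_zero] at this
  linarith

end Real

/-- `t / (exp t - 1)` with its removable singularity at `0` filled in (Lean's `0 / 0` is `0`). -/
noncomputable def divExpSubOne (t : ℝ) : ℝ := if t = 0 then 1 else t / (exp t - 1)

@[simp]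
theorem divExpSubOne_zero : divExpSubOne 0 = 1 :=
  if_pos rfl

theorem divExpSubOne_of_ne_zero {t : ℝ} (ht : t ≠ 0) : divExpSubOne t = t / (exp t - 1) :=
  if_neg ht

theorem divExpSubOne_eq_inv_dslope_exp (t : ℝ) : divExpSubOne t = (dslope exp 0 t)⁻¹ := by
  rcases eq_or_ne t 0 with rfl | ht
  · simp [divExpSubOne, dslope_same]
  · rw [divExpSubOne_of_ne_zero ht, dslope_of_ne _ ht, slope_def_field, exp_zero, sub_zero,
      inv_div]

theorem continuous_divExpSubOne : Continuous divExpSubOne := by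
  have hslope : Continuous (dslope exp 0) := continuousOn_univ.1 <|
    (continuousOn_dslope univ_mem).2 ⟨continuous_exp.continuousOn, differentiableAt_exp⟩
  have hne : ∀ t, dslope exp 0 t ≠ 0 := fun t => by
    rcases eq_or_ne t 0 with rfl | ht
    · simp [dslope_same]
    · rw [dslope_of_ne _ ht, slope_def_field, exp_zero, sub_zero]
      exact div_ne_zero (exp_sub_one_ne_zero ht) ht
  rw [show divExpSubOne = fun t => (dslope exp 0 t)⁻¹ from funext divExpSubOne_eq_inv_dslope_exp]
  exact hslope.inv₀ hne

theorem divExpSubOne_neg (t : ℝ) : divExpSubOne (-t) = divExpSubOne t + t := by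
  rcases eq_or_ne t 0 with rfl | ht
  · simp
  rw [divExpSubOne_of_ne_zero ht, divExpSubOne_of_ne_zero (neg_ne_zero.2 ht)]
  have h1 := exp_sub_one_ne_zero ht
  have h2 : 1 - exp t ≠ 0 := fun h => h1 (by linarith)
  rw [exp_neg]
  field_simp
  ring

theorem one_sub_half_lt_divExpSubOne {t : ℝ} (ht : t ≠ 0) : 1 - t / 2 < divExpSubOne t := by
  wlog hpos : 0 < t generalizing t
  · have := this (neg_ne_zero.2 ht) (neg_pos.2 ((not_lt.1 hpos).lt_of_ne ht))
    rw [divExpSubOne_neg] at this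
    linarith
  have hE : 0 < exp t - 1 := sub_pos.2 (one_lt_exp_iff.2 hpos)
  rw [divExpSubOne_of_ne_zero ht, lt_div_iff₀ hE]
  linarith [two_mul_exp_sub_one_lt hpos]

theorem hasDerivAt_divExpSubOne {t : ℝ} (ht : t ≠ 0) :
    HasDerivAt divExpSubOne ((exp t - 1 - t * exp t) / (exp t - 1) ^ 2) t := by
  have h : HasDerivAt (fun s => s / (exp s - 1))
      ((1 * (exp t - 1) - t * exp t) / (exp t - 1) ^ 2) t :=
    (hasDerivAt_id' t).div ((hasDerivAt_exp t).sub_const 1) (exp_sub_one_ne_zero ht)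
  rw [one_mul] at h
  refine h.congr_of_eventuallyEq ?_
  filter_upwards [isOpen_ne.mem_nhds ht] with s hs using divExpSubOne_of_ne_zero hs

theorem hasDerivAt_deriv_divExpSubOne {t : ℝ} (ht : t ≠ 0) :
    HasDerivAt (fun s => (exp s - 1 - s * exp s) / (exp s - 1) ^ 2)
      (exp t * (t * (exp t + 1) - 2 * (exp t - 1)) / (exp t - 1) ^ 3) t := by
  have hE := exp_sub_one_ne_zero ht
  have hnum : HasDerivAt (fun s => exp s - 1 - s * exp s) (exp t - (1 * exp t + t * exp t)) t :=
    ((hasDerivAt_exp t).sub_const 1).sub ((hasDerivAt_id' t).mul (hasDerivAt_exp t))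
  have hden : HasDerivAt (fun s => (exp s - 1) ^ 2) (2 * (exp t - 1) * exp t) t :=
    (((hasDerivAt_exp t).sub_const 1).pow 2).congr_deriv (by norm_num)
  refine (hnum.div hden (pow_ne_zero 2 hE)).congr_deriv ?_
  field_simp
  ring

theorem strictConvexOn_divExpSubOne_Ici : StrictConvexOn ℝ (Ici 0) divExpSubOne := by
  refine strictConvexOn_of_deriv2_pos (convex_Ici 0) continuous_divExpSubOne.continuousOn
    fun t ht => ?_
  rw [interior_Ici] at ht
  have hderiv : deriv divExpSubOne =ᶠ[𝓝 t] fun s => (exp s - 1 - s * exp s) / (exp s - 1) ^ 2 := by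
    filter_upwards [isOpen_ne.mem_nhds (ne_of_gt ht)] with s hs
    exact (hasDerivAt_divExpSubOne hs).deriv
  rw [Function.iterate_succ_apply, Function.iterate_one, hderiv.deriv_eq,
    (hasDerivAt_deriv_divExpSubOne (ne_of_gt ht)).deriv]
  have hE : 0 < exp t - 1 := sub_pos.2 (one_lt_exp_iff.2 ht)
  have := two_mul_exp_sub_one_lt ht
  exact div_pos (mul_pos (exp_pos t) (by linarith)) (pow_pos hE 3)

theorem strictConvexOn_divExpSubOne_Iic : StrictConvexOn ℝ (Iic 0) divExpSubOne := by
  let neg : ℝ →ₗ[ℝ] ℝ := -LinearMap.id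
  have hrefl := strictConvexOn_divExpSubOne_Ici.comp_linearMap (g := neg) neg_injective
  have h := hrefl.add_convexOn (neg.convexOn hrefl.1)
  have hset : neg ⁻¹' Ici 0 = Iic 0 := by ext; simp [neg]
  have hfun : divExpSubOne ∘ neg + neg = divExpSubOne := by
    funext t; simp [neg, divExpSubOne_neg]
  rwa [hset, hfun] at h

theorem strictConvexOn_divExpSubOne : StrictConvexOn ℝ univ divExpSubOne :=
  strictConvexOn_divExpSubOne_Iic.of_Iic_of_Ici strictConvexOn_divExpSubOne_Ici (m := -1 / 2)
    fun t ht => by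
      rw [divExpSubOne_zero]
      linarith [one_sub_half_lt_divExpSubOne ht]

theorem stmt_9 (j1 j2 rho2 alpha : ℝ)
    (hj1 : 0 < j1) (hj2 : 0 < j2) (hrho2 : 0 < rho2) (hrho2' : rho2 < 1)
    (halpha : 0 < alpha)
    (J : ℝ → ℝ)
    (hJ : ∀ C : ℝ, C ≠ 0 →
      J C = C * (j1 * (1 / (Real.exp (alpha * C) - 1))
        + j2 * (rho2 / (1 - rho2)) * (Real.exp (alpha * C) / (Real.exp (alpha * C) - 1))))
    (hJ0 : ContinuousAt J 0) :
    StrictConvexOn ℝ Set.univ J := by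
  set b := j2 * (rho2 / (1 - rho2))
  have hb : 0 < b := mul_pos hj2 (div_pos hrho2 (sub_pos.2 hrho2'))
  let K : ℝ → ℝ := fun C => (j1 + b) / alpha * divExpSubOne (alpha * C) + b * C
  have hJK : ∀ C ≠ 0, J C = K C := fun C hC => by
    have hαC := mul_ne_zero halpha.ne' hC
    have hE := exp_sub_one_ne_zero hαC
    have hα := halpha.ne'
    simp only [hJ C hC, K, divExpSubOne_of_ne_zero hαC]
    generalize exp (alpha * C) = E at hE ⊢
    field_simp
    ring
  have hK : Continuous K := by
    have := continuous_divExpSubOne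
    fun_prop
  have hJK0 : J 0 = K 0 :=
    tendsto_nhds_unique_of_eventuallyEq (l := 𝓝[≠] 0) (hJ0.tendsto.mono_left nhdsWithin_le_nhds)
      ((hK.tendsto 0).mono_left nhdsWithin_le_nhds) (eventually_nhdsWithin_of_forall hJK)
  obtain rfl : J = K := funext fun C => (eq_or_ne C 0).elim (· ▸ hJK0) (hJK C)
  have hscaled := strictConvexOn_divExpSubOne.comp_linearMap (g := LinearMap.mul ℝ ℝ alpha)
    (mul_right_injective₀ halpha.ne')
  exact (hscaled.const_mul (div_pos (add_pos hj1 hb) halpha)).add_convexOn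
    ((LinearMap.mul ℝ ℝ b).convexOn convex_univ)
end

section
/- Let $a_0 \le a_1 \le \dots \le a_L$ be real numbers, not all equal, and let $F_L(y) = f_L(1 - y/L)$ where $f_L(z) = (\sum_{i=0}^L a_i z^i)/(\sum_{i=0}^L z^i)$. Then $F_L$ is strictly decreasing on $(0, L)$. -/
/-!
`powerAverage a L z` is the paper's `f_L(z)`: the mean of `a₀, …, a_L` under weights
proportional to `zⁱ`. For `0 < y < x` the weight ratio `xⁱ / yⁱ` increases with `i`, so every term
of the symmetrised double sum `∑ᵢ ∑ⱼ (aᵢ - aⱼ) (xⁱ yʲ - yⁱ xʲ)` is nonnegative, and a term where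
`a` jumps is positive. That double sum is twice the cross-multiplied difference `f_L(x) - f_L(y)`,
so `f_L` is strictly increasing on `(0, ∞)`; `y ↦ 1 - y / L` reverses the order on `(0, L)`.
-/

open Finset

theorem Finset.sum_sum_sub_mul_cross_eq {ι R : Type*} [CommRing R] (s : Finset ι)
    (a u v : ι → R) :
    ∑ i ∈ s, ∑ j ∈ s, (a i - a j) * (u i * v j - v i * u j)
      = 2 * ((∑ i ∈ s, a i * u i) * ∑ i ∈ s, v i - (∑ i ∈ s, a i * v i) * ∑ i ∈ s, u i) := by
  have hhalf : ∑ i ∈ s, ∑ j ∈ s, a i * (u i * v j - v i * u j)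
      = (∑ i ∈ s, a i * u i) * ∑ i ∈ s, v i - (∑ i ∈ s, a i * v i) * ∑ i ∈ s, u i := by
    simp only [sum_mul_sum, ← sum_sub_distrib, mul_sub, mul_assoc]
  have hswap : ∑ i ∈ s, ∑ j ∈ s, a j * (u i * v j - v i * u j)
      = -∑ i ∈ s, ∑ j ∈ s, a i * (u i * v j - v i * u j) := by
    rw [sum_comm]
    simp only [← sum_neg_distrib]
    exact sum_congr rfl fun _ _ => sum_congr rfl fun _ _ => by ring
  simp only [sub_mul, sum_sub_distrib, hswap, hhalf]
  ring

theorem Finset.sum_mul_sum_lt_sum_mul_sum_of_cross_le {ι R : Type*} [LinearOrder ι]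
    [CommRing R] [LinearOrder R] [IsStrictOrderedRing R] {s : Finset ι} {a u v : ι → R}
    (ha : ∀ i ∈ s, ∀ j ∈ s, i ≤ j → a i ≤ a j)
    (huv : ∀ i ∈ s, ∀ j ∈ s, i ≤ j → u i * v j ≤ v i * u j)
    (hstrict : ∃ i ∈ s, ∃ j ∈ s, a i < a j ∧ u i * v j < v i * u j) :
    (∑ i ∈ s, a i * v i) * ∑ i ∈ s, u i < (∑ i ∈ s, a i * u i) * ∑ i ∈ s, v i := by
  have hle : ∀ i ∈ s, ∀ j ∈ s, i ≤ j → 0 ≤ (a i - a j) * (u i * v j - v i * u j) :=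
    fun i hi j hj hij => mul_nonneg_of_nonpos_of_nonpos (sub_nonpos.2 (ha i hi j hj hij))
      (sub_nonpos.2 (huv i hi j hj hij))
  have hterm : ∀ i ∈ s, ∀ j ∈ s, 0 ≤ (a i - a j) * (u i * v j - v i * u j) := by
    intro i hi j hj
    rcases le_total i j with hij | hji
    · exact hle i hi j hj hij
    · linarith [hle j hj i hi hji]
  obtain ⟨i, hi, j, hj, ha_lt, huv_lt⟩ := hstrict
  have hpos : 0 < ∑ i ∈ s, ∑ j ∈ s, (a i - a j) * (u i * v j - v i * u j) :=
    sum_pos' (fun i hi => sum_nonneg (hterm i hi)) ⟨i, hi, sum_pos' (hterm i hi)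
      ⟨j, hj, mul_pos_of_neg_of_neg (sub_neg.2 ha_lt) (sub_neg.2 huv_lt)⟩⟩
  rw [sum_sum_sub_mul_cross_eq] at hpos
  linarith

theorem pow_mul_pow_le_pow_mul_pow_s16 {R : Type*} [CommSemiring R] [PartialOrder R]
    [IsOrderedRing R] {x y : R} {i j : ℕ} (hy : 0 ≤ y) (hyx : y ≤ x) (hij : i ≤ j) :
    x ^ i * y ^ j ≤ y ^ i * x ^ j := by
  obtain ⟨k, rfl⟩ := Nat.exists_eq_add_of_le hij
  have hx : 0 ≤ x := hy.trans hyx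
  calc x ^ i * y ^ (i + k) = (x ^ i * y ^ i) * y ^ k := by ring
    _ ≤ (x ^ i * y ^ i) * x ^ k := by gcongr
    _ = y ^ i * x ^ (i + k) := by ring

theorem pow_mul_pow_lt_pow_mul_pow_s16 {R : Type*} [CommSemiring R] [PartialOrder R]
    [IsStrictOrderedRing R] {x y : R} {i j : ℕ} (hy : 0 < y) (hyx : y < x) (hij : i < j) :
    x ^ i * y ^ j < y ^ i * x ^ j := by
  obtain ⟨k, rfl⟩ := Nat.exists_eq_add_of_lt hij
  have hx : 0 < x := hy.trans hyx
  calc x ^ i * y ^ (i + k + 1) = (x ^ i * y ^ i) * y ^ (k + 1) := by ring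
    _ < (x ^ i * y ^ i) * x ^ (k + 1) := by gcongr
    _ = y ^ i * x ^ (i + k + 1) := by ring

noncomputable def powerAverage (a : ℕ → ℝ) (L : ℕ) (z : ℝ) : ℝ :=
  (∑ i ∈ range (L + 1), a i * z ^ i) / ∑ i ∈ range (L + 1), z ^ i

theorem powerAverage_strictMonoOn {L : ℕ} {a : ℕ → ℝ}
    (hmono : ∀ i j, i ≤ j → j ≤ L → a i ≤ a j)
    (hne : ∃ i j, i ≤ L ∧ j ≤ L ∧ a i ≠ a j) :
    StrictMonoOn (powerAverage a L) (Set.Ioi 0) := by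
  intro y (hy : 0 < y) x (hx : 0 < x) hyx
  obtain ⟨i, j, hij, hj, ha⟩ : ∃ i j, i < j ∧ j ≤ L ∧ a i < a j := by
    obtain ⟨i, j, hi, hj, hne⟩ := hne
    rcases hne.lt_or_gt with h | h
    · exact ⟨i, j, lt_of_not_ge fun hji => (hmono j i hji hi).not_gt h, hj, h⟩
    · exact ⟨j, i, lt_of_not_ge fun hij => (hmono i j hij hj).not_gt h, hi, h⟩
  have hmem : ∀ {k}, k ≤ L → k ∈ range (L + 1) := fun hk => mem_range.2 (Nat.lt_succ_of_le hk)
  have hsum_pos : ∀ z : ℝ, 0 < z → 0 < ∑ i ∈ range (L + 1), z ^ i :=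
    fun z hz => sum_pos (fun i _ => pow_pos hz i) nonempty_range_add_one
  rw [powerAverage, powerAverage, div_lt_div_iff₀ (hsum_pos y hy) (hsum_pos x hx)]
  exact sum_mul_sum_lt_sum_mul_sum_of_cross_le
    (fun i _ j hj hij => hmono i j hij (Nat.lt_succ_iff.1 (mem_range.1 hj)))
    (fun i _ j _ hij => pow_mul_pow_le_pow_mul_pow_s16 hy.le hyx.le hij)
    ⟨i, hmem (hij.le.trans hj), j, hmem hj, ha, pow_mul_pow_lt_pow_mul_pow_s16 hy hyx hij⟩

theorem stmt_16_general (L : ℕ) (a : ℕ → ℝ)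
    (hmono : ∀ i j, i ≤ j → j ≤ L → a i ≤ a j)
    (hne : ∃ i j, i ≤ L ∧ j ≤ L ∧ a i ≠ a j) :
    ∀ y1 y2 : ℝ, 0 < y1 → y1 < y2 → y2 < L →
      (∑ i ∈ Finset.range (L + 1), a i * (1 - y2 / L) ^ i)
          / (∑ i ∈ Finset.range (L + 1), (1 - y2 / L) ^ i)
        < (∑ i ∈ Finset.range (L + 1), a i * (1 - y1 / L) ^ i)
          / (∑ i ∈ Finset.range (L + 1), (1 - y1 / L) ^ i) := by
  intro y1 y2 hy1 h12 hy2
  have hL : (0 : ℝ) < L := by linarith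
  have hz2 : 0 < 1 - y2 / L := sub_pos.2 ((div_lt_one hL).2 hy2)
  have hz12 : 1 - y2 / L < 1 - y1 / L := by gcongr
  exact powerAverage_strictMonoOn hmono hne hz2 (hz2.trans hz12) hz12

theorem stmt_16 (L : ℕ) (hL : 0 < L) (a : ℕ → ℝ)
    (hmono : ∀ i j, i ≤ j → j ≤ L → a i ≤ a j)
    (hne : ∃ i j, i ≤ L ∧ j ≤ L ∧ a i ≠ a j) :
    ∀ y1 y2 : ℝ, 0 < y1 → y1 < y2 → y2 < L →
      (∑ i ∈ Finset.range (L + 1), a i * (1 - y2 / L) ^ i)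
          / (∑ i ∈ Finset.range (L + 1), (1 - y2 / L) ^ i)
        < (∑ i ∈ Finset.range (L + 1), a i * (1 - y1 / L) ^ i)
          / (∑ i ∈ Finset.range (L + 1), (1 - y1 / L) ^ i) :=
  stmt_16_general L a hmono hne
end
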